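/- arXiv:2310.19343 — 4 statements merged into one kernel-verified Lean document; each statement's English description precedes it below -/
import Mathlib

section
/- Let α ∈ (0,1) and let Q be a probability measure on ℝ with finite first moment. Define f : ℝ → ℝ by f(t) = ∫ ρ_α(y,t) dQ(y). Then the set of minimizers of f over ℝ is nonempty and equals the α-quantile set of Q, i.e. {t ∈ ℝ : Q((−∞,t]) ≥ α and Q([t,∞)) ≥ 1−α}. -/
/-!
For `t ≤ s` the increment `ρ_α(y, s) - ρ_α(y, t)` lies pointwise between `(s - t)(1{y ≤ t} - α)`
and `(s - t)(1{y < s} - α)`. Integrating, with `F` the CDF of `Q`, the increment of the expected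
loss lies between `(s - t)(F t - α)` and `(s - t)(F(s⁻) - α)`. Hence `t` is a minimizer iff
`F(t⁻) ≤ α ≤ F t`: right continuity of `F` gives the second inequality, the left limit the first.
Since `Q [t, ∞) = 1 - F(t⁻)`, this is the quantile condition, and `inf {x | α ≤ F x}` satisfies it.
-/

open MeasureTheory Real

/-- The quantile (pinball) loss of a prediction `t` for an outcome `y` at level `α`. -/
noncomputable def pinball (α y t : ℝ) : ℝ :=
  if t < y then α * (y - t) else (1 - α) * (t - y)

/-- The `α`-quantile set of a measure `Q` on `ℝ`. -/
def quantileSet (α : ℝ) (Q : Measure ℝ) : Set ℝ :=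
  {t : ℝ | ENNReal.ofReal α ≤ Q (Set.Iic t) ∧ ENNReal.ofReal (1 - α) ≤ Q (Set.Ici t)}

open ProbabilityTheory Set Function

lemma pinball_eq_mul_add_max (α y t : ℝ) : pinball α y t = α * (y - t) + max (t - y) 0 := by
  unfold pinball
  split_ifs
  · rw [max_eq_right (by linarith)]; ring
  · rw [max_eq_left (by linarith)]; ring

lemma le_pinball_sub_pinball (α y : ℝ) {t s : ℝ} (hts : t ≤ s) :
    (s - t) * ((Iic t).indicator 1 y - α) ≤ pinball α y s - pinball α y t := by
  unfold pinball indicator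
  split_ifs <;> simp_all only [mem_Iic, Pi.one_apply, not_lt] <;> nlinarith

lemma pinball_sub_pinball_le (α y : ℝ) {t s : ℝ} (hts : t ≤ s) :
    pinball α y s - pinball α y t ≤ (s - t) * ((Iio s).indicator 1 y - α) := by
  unfold pinball indicator
  split_ifs <;> simp_all only [mem_Iio, Pi.one_apply, not_lt] <;> nlinarith

variable {Q : Measure ℝ}

lemma integrable_pinball [IsFiniteMeasure Q] (hm : Integrable id Q) (α t : ℝ) :
    Integrable (fun y => pinball α y t) Q := by
  simp only [pinball_eq_mul_add_max]
  exact ((hm.sub (integrable_const t)).const_mul α).add ((integrable_const t).sub hm).pos_part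

lemma integral_mul_indicator_one_sub_const [IsProbabilityMeasure Q] (c α : ℝ) {S : Set ℝ}
    (hS : MeasurableSet S) :
    ∫ y, c * (S.indicator 1 y - α) ∂Q = c * (Q.real S - α) := by
  have h1 : Integrable (S.indicator 1) Q := (integrable_const (1 : ℝ)).indicator hS
  rw [integral_const_mul, integral_sub h1 (integrable_const α), integral_indicator_one hS]
  simp

lemma measureReal_Iio_eq_leftLim_cdf [IsProbabilityMeasure Q] (x : ℝ) :
    Q.real (Iio x) = leftLim (cdf Q) x := by
  have h := (cdf Q).measure_Iio (tendsto_cdf_atBot Q) x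
  rw [measure_cdf, sub_zero] at h
  rw [measureReal_def, h,
    ENNReal.toReal_ofReal ((cdf_nonneg Q (x - 1)).trans ((cdf Q).mono.le_leftLim (sub_one_lt x)))]

lemma measure_Ici_eq_ofReal_one_sub_leftLim_cdf [IsProbabilityMeasure Q] (x : ℝ) :
    Q (Ici x) = ENNReal.ofReal (1 - leftLim (cdf Q) x) := by
  have h := (cdf Q).measure_Ici (tendsto_cdf_atTop Q) x
  rwa [measure_cdf] at h

lemma mem_quantileSet_iff [IsProbabilityMeasure Q] {α t : ℝ} :
    t ∈ quantileSet α Q ↔ α ≤ cdf Q t ∧ leftLim (cdf Q) t ≤ α := by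
  have hle : leftLim (cdf Q) t ≤ 1 := ((cdf Q).mono.leftLim_le le_rfl).trans (cdf_le_one Q t)
  rw [quantileSet, mem_ofPred_eq, ← ofReal_cdf, measure_Ici_eq_ofReal_one_sub_leftLim_cdf,
    ENNReal.ofReal_le_ofReal_iff (cdf_nonneg Q t), ENNReal.ofReal_le_ofReal_iff (by linarith)]
  constructor <;> rintro ⟨h1, h2⟩ <;> exact ⟨h1, by linarith⟩

section
variable [IsProbabilityMeasure Q] (α : ℝ) {t s : ℝ}

lemma mul_cdf_sub_le_integral_pinball_sub (hm : Integrable id Q) (hts : t ≤ s) :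
    (s - t) * (cdf Q t - α) ≤ (∫ y, pinball α y s ∂Q) - ∫ y, pinball α y t ∂Q := by
  rw [← integral_sub (integrable_pinball hm α s) (integrable_pinball hm α t), cdf_eq_real,
    ← integral_mul_indicator_one_sub_const _ _ measurableSet_Iic]
  exact integral_mono
    ((integrable_const _).indicator measurableSet_Iic |>.sub (integrable_const α) |>.const_mul _)
    ((integrable_pinball hm α s).sub (integrable_pinball hm α t))
    (fun y => le_pinball_sub_pinball α y hts)

lemma integral_pinball_sub_le_mul_leftLim_cdf_sub (hm : Integrable id Q) (hts : t ≤ s) :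
    (∫ y, pinball α y s ∂Q) - ∫ y, pinball α y t ∂Q ≤ (s - t) * (leftLim (cdf Q) s - α) := by
  rw [← integral_sub (integrable_pinball hm α s) (integrable_pinball hm α t),
    ← measureReal_Iio_eq_leftLim_cdf, ← integral_mul_indicator_one_sub_const _ _ measurableSet_Iio]
  exact integral_mono ((integrable_pinball hm α s).sub (integrable_pinball hm α t))
    ((integrable_const _).indicator measurableSet_Iio |>.sub (integrable_const α) |>.const_mul _)
    (fun y => pinball_sub_pinball_le α y hts)

end

lemma StieltjesFunction.le_of_forall_gt_le (f : StieltjesFunction ℝ) {a t : ℝ}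
    (h : ∀ s, t < s → a ≤ f s) : a ≤ f t :=
  ge_of_tendsto ((f.right_continuous t).mono Ioi_subset_Ici_self)
    (eventually_nhdsWithin_of_forall h)

lemma Monotone.leftLim_le_of_forall_lt_le {f : ℝ → ℝ} (hf : Monotone f) {a t : ℝ}
    (h : ∀ s, s < t → f s ≤ a) : leftLim f t ≤ a :=
  _root_.le_of_tendsto (hf.tendsto_leftLim t) (eventually_nhdsWithin_of_forall h)

theorem forall_integral_pinball_le_iff [IsProbabilityMeasure Q] (hm : Integrable id Q)
    (α t : ℝ) :
    (∀ s, (∫ y, pinball α y t ∂Q) ≤ ∫ y, pinball α y s ∂Q) ↔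
      α ≤ cdf Q t ∧ leftLim (cdf Q) t ≤ α := by
  constructor
  · intro hmin
    refine ⟨(cdf Q).le_of_forall_gt_le fun s hts => ?_,
      (cdf Q).mono.leftLim_le_of_forall_lt_le fun s hst => ?_⟩
    · have h := integral_pinball_sub_le_mul_leftLim_cdf_sub α hm hts.le
      have : α ≤ leftLim (cdf Q) s := by nlinarith [hmin s]
      exact this.trans ((cdf Q).mono.leftLim_le le_rfl)
    · have h := mul_cdf_sub_le_integral_pinball_sub α hm hst.le
      nlinarith [hmin s]
  · rintro ⟨hF, hL⟩ s
    rcases le_total t s with hts | hst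
    · have h := mul_cdf_sub_le_integral_pinball_sub α hm hts
      nlinarith [mul_nonneg (sub_nonneg.2 hts) (sub_nonneg.2 hF)]
    · have h := integral_pinball_sub_le_mul_leftLim_cdf_sub α hm hst
      nlinarith [mul_nonneg (sub_nonneg.2 hst) (sub_nonneg.2 hL)]

lemma exists_le_cdf_leftLim_cdf_le [IsProbabilityMeasure Q] {α : ℝ} (hα : α ∈ Ioo 0 1) :
    ∃ t, α ≤ cdf Q t ∧ leftLim (cdf Q) t ≤ α := by
  set S := {x | α ≤ cdf Q x}
  have hne : S.Nonempty :=
    ((tendsto_cdf_atTop Q).eventually (lt_mem_nhds hα.2)).exists.imp fun _ h => h.le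
  have hbdd : BddBelow S := by
    obtain ⟨b, hb⟩ := ((tendsto_cdf_atBot Q).eventually (gt_mem_nhds hα.1)).exists_forall_of_atBot
    exact ⟨b, fun x hx => le_of_not_ge fun hxb => (hb x hxb).not_ge hx⟩
  refine ⟨sInf S, (cdf Q).le_of_forall_gt_le fun s hs => ?_,
    (cdf Q).mono.leftLim_le_of_forall_lt_le fun s hs => ?_⟩
  · obtain ⟨x, hxS, hxs⟩ := exists_lt_of_csInf_lt hne hs
    exact hxS.trans ((cdf Q).mono hxs.le)
  · exact le_of_not_ge fun h => (csInf_le hbdd h).not_gt hs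

/-- The set of minimizers of `t ↦ ∫ ρ_α(y, t) dQ(y)` is nonempty and coincides with the
`α`-quantile set of `Q`. -/
theorem stmt0 (α : ℝ) (hα : α ∈ Set.Ioo (0 : ℝ) 1)
    (Q : Measure ℝ) [IsProbabilityMeasure Q]
    (hmoment : Integrable (fun y : ℝ => y) Q) :
    {t : ℝ | ∀ s : ℝ, (∫ y, pinball α y t ∂Q) ≤ ∫ y, pinball α y s ∂Q}.Nonempty ∧
    {t : ℝ | ∀ s : ℝ, (∫ y, pinball α y t ∂Q) ≤ ∫ y, pinball α y s ∂Q} = quantileSet α Q := by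
  have hminimizers : {t : ℝ | ∀ s : ℝ, (∫ y, pinball α y t ∂Q) ≤ ∫ y, pinball α y s ∂Q}
      = quantileSet α Q := by
    ext t
    rw [mem_quantileSet_iff]
    exact forall_integral_pinball_le_iff hmoment α t
  refine ⟨?_, hminimizers⟩
  rw [hminimizers]
  obtain ⟨t, ht⟩ := exists_le_cdf_leftLim_cdf_le (Q := Q) hα
  exact ⟨t, mem_quantileSet_iff.2 ht⟩
end

section
/- Let α ∈ (0,1) and let P be a probability measure on 𝒳 × ℝ under which |Y| ≤ C₀ almost surely. Let ψ : 𝒳 → ℝ be measurable with |ψ(x)| ≤ B for all x. Set M(ψ) = max{α, 1−α}·(B + C₀) and v(ψ) = 1.5 · M(ψ) · R^α_P(ψ). Then (M(ψ), v(ψ)) is a P-pair of Bernstein numbers of L^α(ψ); that is, M(ψ)² · ∫ (exp(L^α(ψ)/M(ψ)) − 1 − L^α(ψ)/M(ψ)) dP ≤ v(ψ)/2. -/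
open MeasureTheory Real

/-- `(M, v)` is a `P`-pair of Bernstein numbers of `f` if `M > 0` and
`M² ⬝ ∫ (exp(|f|/M) - 1 - |f|/M) dP ≤ v/2`. -/
def IsBernsteinPair {Ω : Type*} [MeasurableSpace Ω] (P : Measure Ω) (f : Ω → ℝ)
    (M v : ℝ) : Prop :=
  0 < M ∧ M ^ 2 * (∫ ω, (Real.exp (|f ω| / M) - 1 - |f ω| / M) ∂P) ≤ v / 2

lemma pinball_eq_max {α : ℝ} (_hα0 : 0 < α) (_hα1 : α < 1) (y t : ℝ) :
    pinball α y t = max (α * (y - t)) ((1 - α) * (t - y)) := by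
  unfold pinball
  rcases lt_trichotomy t y with h | h | h
  · rw [if_pos h, max_eq_left]; nlinarith
  · subst h; simp
  · rw [if_neg (not_lt.2 h.le), max_eq_right]; nlinarith

lemma exp_sub_le_aux {x : ℝ} (hx0 : 0 ≤ x) (hx1 : x ≤ 1) :
    Real.exp x - 1 - x ≤ (Real.exp 1 - 2) * x := by
  have h := convexOn_exp.2 (Set.mem_univ (0 : ℝ)) (Set.mem_univ (1 : ℝ))
    (by linarith : (0:ℝ) ≤ 1 - x) hx0 (by ring)
  simp only [smul_eq_mul, mul_zero, mul_one, zero_add, Real.exp_zero] at h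
  nlinarith [h]

/-- Bernstein pair for the quantile loss: with `M(ψ) = max{α, 1-α} ⬝ (B + C₀)` and
`v(ψ) = 1.5 ⬝ M(ψ) ⬝ R^α_P(ψ)`, the pair `(M(ψ), v(ψ))` is a `P`-pair of Bernstein numbers
of `L^α(ψ)`. -/
theorem stmt5 {𝒳 : Type*} [MeasurableSpace 𝒳]
    (α : ℝ) (hα : α ∈ Set.Ioo (0 : ℝ) 1)
    (P : Measure (𝒳 × ℝ)) [IsProbabilityMeasure P]
    (C₀ : ℝ) (hC₀ : 0 < C₀) (hY : ∀ᵐ o ∂P, |o.2| ≤ C₀)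
    (ψ : 𝒳 → ℝ) (hψ : Measurable ψ) (B : ℝ) (hB : 0 < B) (hψB : ∀ x, |ψ x| ≤ B)
    (M v : ℝ) (hM : M = max α (1 - α) * (B + C₀))
    (hv : v = 1.5 * M * ∫ o, pinball α o.2 (ψ o.1) ∂P) :
    IsBernsteinPair P (fun o : 𝒳 × ℝ => pinball α o.2 (ψ o.1)) M v := by
  obtain ⟨hα0, hα1⟩ := hα
  set f : 𝒳 × ℝ → ℝ := fun o => pinball α o.2 (ψ o.1) with hfdef
  have hfeq : ∀ o, f o = max (α * (o.2 - ψ o.1)) ((1 - α) * (ψ o.1 - o.2)) :=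
    fun o => pinball_eq_max hα0 hα1 _ _
  have hmaxpos : 0 < max α (1 - α) := lt_max_of_lt_left hα0
  have hMpos : 0 < M := by rw [hM]; exact mul_pos hmaxpos (by linarith)
  have hf0 : ∀ o, 0 ≤ f o := by
    intro o
    rw [hfeq]
    rcases le_total (ψ o.1) o.2 with h | h
    · exact le_max_of_le_left (mul_nonneg hα0.le (by linarith))
    · exact le_max_of_le_right (mul_nonneg (by linarith) (by linarith))
  have hfM : ∀ᵐ o ∂P, f o ≤ M := by
    filter_upwards [hY] with o hYo
    have hψo := abs_le.1 (hψB o.1)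
    have hYo' := abs_le.1 hYo
    rw [hfeq, hM]
    have h1 := le_max_left α (1 - α)
    have h2 := le_max_right α (1 - α)
    apply max_le
    · calc α * (o.2 - ψ o.1) ≤ α * (B + C₀) :=
            mul_le_mul_of_nonneg_left (by linarith) hα0.le
        _ ≤ max α (1 - α) * (B + C₀) :=
            mul_le_mul_of_nonneg_right h1 (by linarith)
    · calc (1 - α) * (ψ o.1 - o.2) ≤ (1 - α) * (B + C₀) :=
            mul_le_mul_of_nonneg_left (by linarith) (by linarith)
        _ ≤ max α (1 - α) * (B + C₀) :=
            mul_le_mul_of_nonneg_right h2 (by linarith)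
  have hfm : Measurable f := by
    have : f = fun o => max (α * (o.2 - ψ o.1)) ((1 - α) * (ψ o.1 - o.2)) := funext hfeq
    rw [this]
    exact (measurable_const.mul (measurable_snd.sub (hψ.comp measurable_fst))).max
      (measurable_const.mul ((hψ.comp measurable_fst).sub measurable_snd))
  have hf_int : Integrable f P := by
    refine Integrable.mono' (integrable_const M) hfm.aestronglyMeasurable ?_
    filter_upwards [hfM] with o h
    rw [Real.norm_eq_abs, abs_of_nonneg (hf0 o)]; exact h
  -- the integrand
  set g : 𝒳 × ℝ → ℝ := fun o => Real.exp (f o / M) - 1 - f o / M with hgdef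
  have habs : (fun o : 𝒳 × ℝ => Real.exp (|f o| / M) - 1 - |f o| / M) = g := by
    funext o; rw [hgdef]; simp [abs_of_nonneg (hf0 o)]
  have hg0 : ∀ o, 0 ≤ g o := by
    intro o
    have := Real.add_one_le_exp (f o / M)
    simp only [hgdef]; linarith
  have hgle : ∀ᵐ o ∂P, g o ≤ (Real.exp 1 - 2) * (f o / M) := by
    filter_upwards [hfM] with o h
    exact exp_sub_le_aux (div_nonneg (hf0 o) hMpos.le) ((div_le_one hMpos).2 h)
  have hgm : Measurable g := ((hfm.div_const M).exp.sub measurable_const).sub (hfm.div_const M)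
  have hg_int : Integrable g P := by
    refine Integrable.mono' (integrable_const (Real.exp 1)) hgm.aestronglyMeasurable ?_
    filter_upwards [hgle, hfM] with o h hfMo
    rw [Real.norm_eq_abs, abs_of_nonneg (hg0 o)]
    have h2 : (Real.exp 1 - 2) * (f o / M) ≤ (Real.exp 1 - 2) * 1 := by
      apply mul_le_mul_of_nonneg_left ((div_le_one hMpos).2 hfMo)
      nlinarith [Real.add_one_le_exp (1 : ℝ)]
    rw [mul_one] at h2
    exact le_trans h (le_trans h2 (by linarith))
  constructor
  · exact hMpos
  rw [habs]
  have hI : ∫ o, g o ∂P ≤ ∫ o, (Real.exp 1 - 2) / M * f o ∂P := by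
    refine integral_mono_ae hg_int (hf_int.const_mul _) ?_
    filter_upwards [hgle] with o h
    calc g o ≤ (Real.exp 1 - 2) * (f o / M) := h
      _ = (Real.exp 1 - 2) / M * f o := by ring
  rw [integral_const_mul] at hI
  have hIf : 0 ≤ ∫ o, f o ∂P := integral_nonneg hf0
  have he : Real.exp 1 < 2.7182818286 := Real.exp_one_lt_d9
  have hstep : M ^ 2 * ∫ o, g o ∂P ≤ M ^ 2 * ((Real.exp 1 - 2) / M * ∫ o, f o ∂P) :=
    mul_le_mul_of_nonneg_left hI (by positivity)
  have heq : M ^ 2 * ((Real.exp 1 - 2) / M * ∫ o, f o ∂P)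
      = (Real.exp 1 - 2) * M * ∫ o, f o ∂P := by
    field_simp
  rw [hv]
  have : (Real.exp 1 - 2) * M * ∫ o, f o ∂P ≤ 1.5 * M * (∫ o, f o ∂P) / 2 := by
    rw [mul_div_assoc]
    have h075 : Real.exp 1 - 2 ≤ 0.75 := by norm_num at he ⊢; linarith
    calc (Real.exp 1 - 2) * M * ∫ o, f o ∂P
        ≤ 0.75 * M * ∫ o, f o ∂P := by
          apply mul_le_mul_of_nonneg_right _ hIf
          exact mul_le_mul_of_nonneg_right h075 hMpos.le
      _ = 1.5 * M * ((∫ o, f o ∂P) / 2) := by ring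
  calc M ^ 2 * ∫ o, g o ∂P ≤ (Real.exp 1 - 2) * M * ∫ o, f o ∂P := by rw [← heq]; exact hstep
    _ ≤ 1.5 * M * (∫ o, f o ∂P) / 2 := this
end

section
/- Let α ∈ (0,1) and q ∈ (1,∞), and set ϑ = min{2/q, 1}. Let Q be a probability measure on ℝ with support contained in [−1,1], whose α-quantile set is a singleton {t*}, and which has an α-quantile of type q with constants b_Q > 0, a_Q ∈ (0,2]; set γ_Q = b_Q a_Q^{q−1}. Then for every t ∈ [−1,1]: ∫ (ρ_α(y,t) − ρ_α(y,t*))² dQ(y) ≤ 2^{2−ϑ} · q^ϑ · γ_Q^{−ϑ} · ( ∫ (ρ_α(y,t) − ρ_α(y,t*)) dQ(y) )^ϑ. -/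
open MeasureTheory Real

/-!
For `t* ≤ t` write `d = t - t*`. Pointwise, `ρ(y,t) - ρ(y,t*)` equals
`d ((1 - α) - 1_{y > t*}) + 1_{y > t*} (t - y)⁺`; the first term has nonnegative mean because
`Q((-∞,t*]) ≥ α`, and by the layer-cake formula the second has mean `∫₀^d Q((t*, t - u)) du`,
which the type-`q` condition bounds below by `b/q · min(d,a)^(q-1) · d`. Reflecting `y ↦ -y`
(which swaps `α` and `1 - α`) handles `t < t*`. On the other side the loss is `1`-Lipschitz,
so the variance is at most `d²`, and `d ≤ 2` because the type-`q` condition forces `t*` into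
the support `[-1,1]`. Comparing `d²` with the excess-risk bound is then elementary.
-/

open Set

lemma measurable_pinball (α t : ℝ) : Measurable fun y => pinball α y t :=
  Measurable.ite measurableSet_Ioi (by fun_prop) (by fun_prop)

lemma abs_pinball_sub_le {α : ℝ} (hα₀ : 0 ≤ α) (hα₁ : α ≤ 1) (y t t' : ℝ) :
    |pinball α y t - pinball α y t'| ≤ |t - t'| := by
  have := le_abs_self (t - t')
  have := neg_abs_le (t - t')
  unfold pinball
  split_ifs <;> rw [abs_le] <;> constructor <;> nlinarith

lemma pinball_one_sub_neg (α y t : ℝ) : pinball (1 - α) (-y) (-t) = pinball α y t := by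
  unfold pinball
  rcases lt_trichotomy t y with h | rfl | h
  · rw [if_neg (by linarith), if_pos h]; ring
  · simp
  · rw [if_pos (by linarith), if_neg (by linarith)]; ring

section Risk

variable {α : ℝ} {Q : Measure ℝ}

lemma integrable_pinball_sub [IsFiniteMeasure Q] (hα₀ : 0 ≤ α) (hα₁ : α ≤ 1) (t t' : ℝ) :
    Integrable (fun y => pinball α y t - pinball α y t') Q :=
  .of_bound ((measurable_pinball α t).sub (measurable_pinball α t')).aestronglyMeasurable
    |t - t'| (.of_forall fun y => abs_pinball_sub_le hα₀ hα₁ y t t')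

lemma integral_sq_pinball_sub_le [IsProbabilityMeasure Q] (hα₀ : 0 ≤ α) (hα₁ : α ≤ 1)
    (t t' : ℝ) : ∫ y, (pinball α y t - pinball α y t') ^ 2 ∂Q ≤ (t - t') ^ 2 := by
  have hle : ∀ y, (pinball α y t - pinball α y t') ^ 2 ≤ (t - t') ^ 2 := fun y =>
    sq_le_sq.2 (abs_pinball_sub_le hα₀ hα₁ y t t')
  calc ∫ y, (pinball α y t - pinball α y t') ^ 2 ∂Q ≤ ∫ _, (t - t') ^ 2 ∂Q :=
        integral_mono_of_nonneg (.of_forall fun _ => sq_nonneg _) (integrable_const _)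
          (.of_forall hle)
    _ = (t - t') ^ 2 := by simp

lemma pinball_sub_eq {t t' : ℝ} (ht : t' ≤ t) (y : ℝ) :
    pinball α y t - pinball α y t' =
      (t - t') * ((1 - α) - (Ioi t').indicator 1 y) +
        (Ioi t').indicator (fun y => max (t - y) 0) y := by
  unfold pinball
  by_cases hy : t' < y
  · have hy' : y ∈ Ioi t' := hy
    simp only [indicator_of_mem hy', Pi.one_apply, if_pos hy]
    rcases le_or_gt y t with h | h
    · rw [if_neg h.not_gt, max_eq_left (by linarith)]; ring
    · rw [if_pos h, max_eq_right (by linarith)]; ring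
  · have hy' : y ∉ Ioi t' := hy
    simp only [indicator_of_notMem hy', if_neg hy, if_neg (by linarith : ¬ t < y)]
    ring

lemma integral_indicator_le_integral_pinball_sub [IsProbabilityMeasure Q] (hα₀ : 0 ≤ α)
    (hα₁ : α ≤ 1) {t t' : ℝ} (ht : t' ≤ t) (hQ : ENNReal.ofReal α ≤ Q (Iic t')) :
    ∫ y, (Ioi t').indicator (fun y => max (t - y) 0) y ∂Q ≤
      ∫ y, (pinball α y t - pinball α y t') ∂Q := by
  have hmass : Q.real (Ioi t') ≤ 1 - α := by
    rw [← compl_Iic, probReal_compl_eq_one_sub measurableSet_Iic, measureReal_def]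
    linarith [(ENNReal.ofReal_le_iff_le_toReal (measure_ne_top Q _)).1 hQ]
  have hlin : Integrable (fun y => (t - t') * ((1 - α) - (Ioi t').indicator 1 y)) Q :=
    ((integrable_const _).sub ((integrable_const 1).indicator measurableSet_Ioi)).const_mul _
  have hf : Integrable ((Ioi t').indicator fun y => max (t - y) 0) Q :=
    ((integrable_pinball_sub hα₀ hα₁ t t').sub hlin).congr
      (.of_forall fun y => by simp [pinball_sub_eq ht])
  simp_rw [pinball_sub_eq ht]
  rw [integral_add hlin hf, integral_const_mul, integral_sub (integrable_const _)
    ((integrable_const 1).indicator measurableSet_Ioi), integral_indicator_one measurableSet_Ioi]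
  simp only [integral_const, probReal_univ, smul_eq_mul, one_mul]
  nlinarith

lemma setIntegral_le_integral_indicator_max_sub [IsFiniteMeasure Q] {x t : ℝ} {φ : ℝ → ℝ}
    (hφ : IntegrableOn φ (Ioo 0 (t - x))) (hφ₀ : ∀ u ∈ Ioo 0 (t - x), 0 ≤ φ u)
    (hφQ : ∀ u ∈ Ioo 0 (t - x), ENNReal.ofReal (φ u) ≤ Q (Ioo x (t - u))) :
    ∫ u in Ioo 0 (t - x), φ u ≤ ∫ y, (Ioi x).indicator (fun y => max (t - y) 0) y ∂Q := by
  set f := (Ioi x).indicator fun y => max (t - y) 0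
  have hf₀ : 0 ≤ f := indicator_nonneg fun _ _ => le_max_right _ _
  have hfm : Measurable f :=
    (by fun_prop : Measurable fun y => max (t - y) 0).indicator measurableSet_Ioi
  have hf : Integrable f Q := by
    refine .of_bound hfm.aestronglyMeasurable |t - x| (.of_forall fun y => ?_)
    rw [Real.norm_of_nonneg (hf₀ y)]
    refine indicator_apply_le' (fun hy => max_le ?_ (abs_nonneg _)) fun _ => abs_nonneg _
    exact (sub_le_sub_left (le_of_lt hy) t).trans (le_abs_self _)
  rw [← ENNReal.ofReal_le_ofReal_iff (integral_nonneg hf₀),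
    ofReal_integral_eq_lintegral_ofReal hφ
      ((ae_restrict_iff' measurableSet_Ioo).2 (.of_forall hφ₀)),
    ofReal_integral_eq_lintegral_ofReal hf (.of_forall hf₀),
    lintegral_eq_lintegral_meas_lt Q (.of_forall hf₀) hfm.aemeasurable]
  refine (setLIntegral_mono' measurableSet_Ioo fun u hu => (hφQ u hu).trans
    (measure_mono fun y hy => ?_)).trans (lintegral_mono_set Ioo_subset_Ioi_self)
  simp only [mem_ofPred_eq, f, indicator_of_mem (show y ∈ Ioi x from hy.1)]
  exact lt_max_of_lt_left (by linarith [hy.2])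

lemma integral_Ioo_sub_rpow {d q : ℝ} (hd : 0 ≤ d) (hq : 0 < q) :
    ∫ u in Ioo 0 d, (d - u) ^ (q - 1) = d ^ q / q := by
  rw [← integral_Ioc_eq_integral_Ioo, ← intervalIntegral.integral_of_le hd,
    intervalIntegral.integral_comp_sub_left (fun v => v ^ (q - 1)) d, sub_zero, sub_self,
    integral_rpow (Or.inl (by linarith)), sub_add_cancel, zero_rpow hq.ne', sub_zero]

lemma min_div_mul_le_min {a d s : ℝ} (ha : 0 ≤ a) (hs : 0 ≤ s) (hsd : s ≤ d) :
    min d a / d * s ≤ min s a := by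
  rcases hs.eq_or_lt with rfl | hs
  · simp [ha]
  have hd : 0 < d := hs.trans_le hsd
  rw [div_mul_eq_mul_div, div_le_iff₀ hd]
  rcases le_total s a with h | h
  · rw [min_eq_left h]; nlinarith [min_le_left d a]
  · rw [min_eq_right h]; nlinarith [min_le_right d a]

lemma le_integral_pinball_sub_of_le [IsProbabilityMeasure Q] (hα₀ : 0 ≤ α) (hα₁ : α ≤ 1)
    {q a b x t : ℝ} (hq : 1 < q) (hb : 0 ≤ b) (ha : 0 ≤ a) (hxt : x ≤ t)
    (hQ : ENNReal.ofReal α ≤ Q (Iic x))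
    (htype : ∀ s ∈ Icc 0 a, ENNReal.ofReal (b * s ^ (q - 1)) ≤ Q (Ioo x (x + s))) :
    b / q * min (t - x) a ^ (q - 1) * (t - x) ≤ ∫ y, (pinball α y t - pinball α y x) ∂Q := by
  rcases hxt.eq_or_lt with rfl | hxt
  · simp
  set d := t - x
  have hd : 0 < d := sub_pos.2 hxt
  set c := min d a / d
  have hc : 0 ≤ c := div_nonneg (le_min hd.le ha) hd.le
  set φ : ℝ → ℝ := fun u => b * c ^ (q - 1) * (d - u) ^ (q - 1)
  have hφ₀ : ∀ u ∈ Ioo 0 d, 0 ≤ φ u := fun u hu => by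
    have : 0 ≤ d - u := by linarith [hu.2]
    positivity
  have hφQ : ∀ u ∈ Ioo 0 d, ENNReal.ofReal (φ u) ≤ Q (Ioo x (t - u)) := by
    rintro u ⟨hu₀, hud⟩
    have hs : 0 ≤ d - u := by linarith
    calc ENNReal.ofReal (φ u) = ENNReal.ofReal (b * (c * (d - u)) ^ (q - 1)) := by
          rw [mul_rpow hc hs, ← mul_assoc]
      _ ≤ ENNReal.ofReal (b * min (d - u) a ^ (q - 1)) := by
          gcongr
          exact min_div_mul_le_min ha hs (by linarith)
      _ ≤ Q (Ioo x (x + min (d - u) a)) := htype _ ⟨le_min hs ha, min_le_right _ _⟩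
      _ ≤ Q (Ioo x (t - u)) := by
          gcongr
          linarith [min_le_left (d - u) a]
  have hφ : IntegrableOn φ (Ioo 0 d) :=
    (continuous_const.mul ((continuous_const.sub continuous_id).rpow_const
      fun _ => Or.inr (by linarith))).integrableOn_Icc.mono_set Ioo_subset_Icc_self
  calc b / q * min d a ^ (q - 1) * d = ∫ u in Ioo 0 d, φ u := by
        rw [integral_const_mul, integral_Ioo_sub_rpow hd.le (by linarith), div_rpow
          (le_min hd.le ha) hd.le, rpow_sub_one hd.ne']
        field_simp
    _ ≤ _ := setIntegral_le_integral_indicator_max_sub hφ hφ₀ hφQ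
    _ ≤ _ := integral_indicator_le_integral_pinball_sub hα₀ hα₁ hxt.le hQ

lemma le_integral_pinball_sub_of_ge [IsProbabilityMeasure Q] (hα₀ : 0 ≤ α) (hα₁ : α ≤ 1)
    {q a b x t : ℝ} (hq : 1 < q) (hb : 0 ≤ b) (ha : 0 ≤ a) (htx : t ≤ x)
    (hQ : ENNReal.ofReal (1 - α) ≤ Q (Ici x))
    (htype : ∀ s ∈ Icc 0 a, ENNReal.ofReal (b * s ^ (q - 1)) ≤ Q (Ioo (x - s) x)) :
    b / q * min (x - t) a ^ (q - 1) * (x - t) ≤ ∫ y, (pinball α y t - pinball α y x) ∂Q := by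
  have := Measure.isProbabilityMeasure_map (μ := Q) measurable_neg.aemeasurable
  have hmap : ∀ s, MeasurableSet s → Q.map Neg.neg s = Q (Neg.neg ⁻¹' s) := fun s hs =>
    Measure.map_apply measurable_neg hs
  have h := le_integral_pinball_sub_of_le (Q := Q.map Neg.neg) (sub_nonneg.2 hα₁)
    (sub_le_self 1 hα₀) hq hb ha (neg_le_neg htx)
    (by rwa [hmap _ measurableSet_Iic, neg_preimage, neg_Iic, neg_neg])
    fun s hs => by
      rw [hmap _ measurableSet_Ioo, neg_preimage, neg_Ioo, neg_add_eq_sub, neg_sub, neg_neg]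
      exact htype s hs
  rw [integral_map measurable_neg.aemeasurable (f := fun y => pinball _ y _ - pinball _ y _)
      ((measurable_pinball _ _).sub (measurable_pinball _ _)).aestronglyMeasurable,
    neg_sub_neg] at h
  simpa only [pinball_one_sub_neg] using h

lemma le_integral_pinball_sub [IsProbabilityMeasure Q] (hα₀ : 0 ≤ α) (hα₁ : α ≤ 1)
    {q a b x : ℝ} (hq : 1 < q) (hb : 0 ≤ b) (ha : 0 ≤ a) (hx : x ∈ quantileSet α Q)
    (htype : ∀ s ∈ Icc 0 a, ENNReal.ofReal (b * s ^ (q - 1)) ≤ Q (Ioo (x - s) x) ∧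
      ENNReal.ofReal (b * s ^ (q - 1)) ≤ Q (Ioo x (x + s))) (t : ℝ) :
    b / q * min |t - x| a ^ (q - 1) * |t - x| ≤ ∫ y, (pinball α y t - pinball α y x) ∂Q := by
  rcases le_total x t with h | h
  · rw [abs_of_nonneg (sub_nonneg.2 h)]
    exact le_integral_pinball_sub_of_le hα₀ hα₁ hq hb ha h hx.1 fun s hs => (htype s hs).2
  · rw [abs_sub_comm, abs_of_nonneg (sub_nonneg.2 h)]
    exact le_integral_pinball_sub_of_ge hα₀ hα₁ hq hb ha h hx.2 fun s hs => (htype s hs).1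

end Risk

lemma mem_Icc_of_measure_Ioo_ne_zero {Q : Measure ℝ} {c d x a : ℝ} (hQ : Q (Icc c d)ᶜ = 0)
    (ha : 0 < a) (hpos : ∀ s ∈ Ioc 0 a, Q (Ioo (x - s) x) ≠ 0 ∧ Q (Ioo x (x + s)) ≠ 0) :
    x ∈ Icc c d := by
  have hmeets : ∀ {u v}, Q (Ioo u v) ≠ 0 → u < d ∧ c < v := fun {u v} h => by
    by_contra! h'
    refine h (measure_mono_null (show Ioo u v ⊆ (Icc c d)ᶜ from fun y hy hyS => ?_) hQ)
    linarith [h' (hy.1.trans_le hyS.2), hy.2, hyS.1]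
  constructor
  · by_contra! hx
    have := hmeets ((hpos (min a (c - x)) ⟨lt_min ha (by linarith), min_le_left _ _⟩).2)
    linarith [min_le_right a (c - x)]
  · by_contra! hx
    have := hmeets ((hpos (min a (x - d)) ⟨lt_min ha (by linarith), min_le_left _ _⟩).1)
    linarith [min_le_right a (x - d)]

lemma sq_le_of_le_excess {q ϑ a b d E : ℝ} (hq : 1 < q) (hϑ₀ : 0 ≤ ϑ) (hϑ₁ : ϑ ≤ 1)
    (hqϑ : q * ϑ ≤ 2) (hb : 0 < b) (ha : 0 < a) (ha₂ : a ≤ 2) (hd : 0 ≤ d) (hd₂ : d ≤ 2)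
    (hE : b / q * min d a ^ (q - 1) * d ≤ E) :
    d ^ 2 ≤ 2 ^ (2 - ϑ) * q ^ ϑ * (b * a ^ (q - 1)) ^ (-ϑ) * E ^ ϑ := by
  have hq₀ : 0 < q := by linarith
  rcases hd.eq_or_lt with rfl | hd
  · rw [zero_pow two_ne_zero]
    have : 0 ≤ E := by simpa using hE
    positivity
  have hm : 0 < min d a := lt_min hd ha
  have hratio : (d / 2) ^ (2 - ϑ) ≤ (min d a / a) ^ ((q - 1) * ϑ) := by
    rcases le_total a d with had | hda
    · rw [min_eq_right had, div_self ha.ne', one_rpow]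
      exact rpow_le_one (by positivity) (by linarith) (by linarith)
    · rw [min_eq_left hda]
      calc (d / 2) ^ (2 - ϑ) ≤ (d / 2) ^ ((q - 1) * ϑ) :=
            rpow_le_rpow_of_exponent_ge (by positivity) (by linarith) (by linarith)
        _ ≤ (d / a) ^ ((q - 1) * ϑ) :=
            rpow_le_rpow (by positivity) (div_le_div_of_nonneg_left hd.le ha ha₂)
              (mul_nonneg (by linarith) hϑ₀)
  calc d ^ 2 = 2 ^ (2 - ϑ) * (d / 2) ^ (2 - ϑ) * d ^ ϑ := by
        rw [div_rpow hd.le zero_le_two, mul_div_cancel₀ _ (by positivity), ← rpow_add hd,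
          sub_add_cancel, ← rpow_natCast]
        norm_num
    _ ≤ 2 ^ (2 - ϑ) * (min d a / a) ^ ((q - 1) * ϑ) * d ^ ϑ := by gcongr
    _ = 2 ^ (2 - ϑ) * ((min d a / a) ^ (q - 1) * d) ^ ϑ := by
        rw [mul_rpow (by positivity) hd.le, ← rpow_mul (by positivity), mul_assoc]
    _ = 2 ^ (2 - ϑ) * q ^ ϑ * (b * a ^ (q - 1)) ^ (-ϑ) * (b / q * min d a ^ (q - 1) * d) ^ ϑ := by
        have hbase : (min d a / a) ^ (q - 1) * d =
            q * (b * a ^ (q - 1))⁻¹ * (b / q * min d a ^ (q - 1) * d) := by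
          rw [div_rpow hm.le ha.le]
          field_simp
        rw [hbase, mul_rpow (by positivity) (by positivity), mul_rpow hq₀.le (by positivity),
          inv_rpow (by positivity), rpow_neg (by positivity)]
        ring
    _ ≤ _ := by gcongr

/-- Covariate-free Steinwart–Christmann variance bound: if `Q` is supported in `[-1,1]`,
has a unique `α`-quantile `t*`, and has an `α`-quantile of type `q` with constants
`b_Q > 0`, `a_Q ∈ (0,2]`, then for every `t ∈ [-1,1]`,
`∫ (ρ_α(y,t) - ρ_α(y,t*))² dQ ≤ 2^{2-ϑ} q^ϑ γ_Q^{-ϑ} (∫ (ρ_α(y,t) - ρ_α(y,t*)) dQ)^ϑ`,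
where `γ_Q = b_Q a_Q^{q-1}` and `ϑ = min{2/q, 1}`. -/
theorem stmt9 (α : ℝ) (hα : α ∈ Set.Ioo (0 : ℝ) 1) (q : ℝ) (hq : 1 < q)
    (ϑ : ℝ) (hϑ : ϑ = min (2 / q) 1)
    (Q : Measure ℝ) [IsProbabilityMeasure Q]
    (hsupp : Q (Set.Icc (-1 : ℝ) 1)ᶜ = 0)
    (tstar : ℝ) (hsingleton : quantileSet α Q = {tstar})
    (bQ aQ : ℝ) (hbQ : 0 < bQ) (haQ : aQ ∈ Set.Ioc (0 : ℝ) 2)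
    (htype : ∀ s ∈ Set.Icc (0 : ℝ) aQ,
      ENNReal.ofReal (bQ * s ^ (q - 1)) ≤ Q (Set.Ioo (tstar - s) tstar) ∧
      ENNReal.ofReal (bQ * s ^ (q - 1)) ≤ Q (Set.Ioo tstar (tstar + s)))
    (t : ℝ) (ht : t ∈ Set.Icc (-1 : ℝ) 1) :
    (∫ y, (pinball α y t - pinball α y tstar) ^ 2 ∂Q) ≤
      2 ^ (2 - ϑ) * q ^ ϑ * (bQ * aQ ^ (q - 1)) ^ (-ϑ) *
        (∫ y, (pinball α y t - pinball α y tstar) ∂Q) ^ ϑ := by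
  obtain ⟨hα₀, hα₁⟩ := hα
  obtain ⟨ha₀, ha₂⟩ := haQ
  have htstar : tstar ∈ quantileSet α Q := hsingleton ▸ rfl
  have hpos : ∀ s ∈ Ioc 0 aQ, Q (Ioo (tstar - s) tstar) ≠ 0 ∧ Q (Ioo tstar (tstar + s)) ≠ 0 :=
    fun s hs => by
      have hb : 0 < ENNReal.ofReal (bQ * s ^ (q - 1)) :=
        ENNReal.ofReal_pos.2 (mul_pos hbQ (rpow_pos_of_pos hs.1 _))
      have h := htype s (Ioc_subset_Icc_self hs)
      exact ⟨(hb.trans_le h.1).ne', (hb.trans_le h.2).ne'⟩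
  have htstar_mem := mem_Icc_of_measure_Ioo_ne_zero hsupp ha₀ hpos
  have hdist : |t - tstar| ≤ 2 := abs_sub_le_iff.2
    ⟨by linarith [ht.2, htstar_mem.1], by linarith [ht.1, htstar_mem.2]⟩
  have hqϑ : q * ϑ ≤ 2 := by
    rw [hϑ, ← le_div_iff₀' (by linarith)]
    exact min_le_left _ _
  calc ∫ y, (pinball α y t - pinball α y tstar) ^ 2 ∂Q ≤ |t - tstar| ^ 2 :=
        (integral_sq_pinball_sub_le hα₀.le hα₁.le t tstar).trans_eq (sq_abs _).symm
    _ ≤ _ := sq_le_of_le_excess hq (hϑ ▸ by positivity) (hϑ ▸ min_le_right _ _) hqϑ hbQ ha₀ ha₂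
        (abs_nonneg _) hdist
        (le_integral_pinball_sub hα₀.le hα₁.le hq hbQ.le ha₀.le htstar htype t)
end

section
/- Let β ∈ (0,1], ν > 0 and b₂ > 0, and define C₁(δ) = 2^{5−β}(1+δ)² ν / δ^β and C₂(δ) = 8(1+δ)b₂/3 for δ > 0. Then there exist C > 0 and t₀ ≥ 2 (depending only on β, ν, b₂) such that for all t ≥ t₀, all integers K ≥ 1, and all integers N with 3·log t ≤ N ≤ 4·log t: 3·( C₁(t^{−1/2}) · log(2KN)/t )^{1/(2−β)} + 2·C₂(t^{−1/2}) · log(2KN)/t ≤ C · log(8K·log t) / t^{1/2}. -/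
open Real

set_option maxHeartbeats 1000000 in
/-- Analytic remainder estimate in the proof of the online excess risk bound: with
`C₁(δ) = 2^{5-β}(1+δ)² ν / δ^β` and `C₂(δ) = 8(1+δ)b₂/3`, the choice `δ = t^{-1/2}` and any
integer `N ∈ [3 log t, 4 log t]` give
`3 (C₁(δ) log(2KN)/t)^{1/(2-β)} + 2 C₂(δ) log(2KN)/t ≤ C log(8K log t)/√t`
for all `t ≥ t₀` and all integers `K ≥ 1`. -/
theorem stmt13 (β ν b₂ : ℝ) (hβ : β ∈ Set.Ioc (0 : ℝ) 1) (hν : 0 < ν) (hb₂ : 0 < b₂)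
    (C₁ C₂ : ℝ → ℝ)
    (hC₁ : ∀ δ, C₁ δ = 2 ^ ((5 : ℝ) - β) * (1 + δ) ^ 2 * ν / δ ^ β)
    (hC₂ : ∀ δ, C₂ δ = 8 * (1 + δ) * b₂ / 3) :
    ∃ C > (0 : ℝ), ∃ t₀ : ℝ, 2 ≤ t₀ ∧
      ∀ t : ℝ, t₀ ≤ t → ∀ K : ℕ, 1 ≤ K → ∀ N : ℕ,
        3 * Real.log t ≤ (N : ℝ) → (N : ℝ) ≤ 4 * Real.log t →
        3 * (C₁ (t ^ (-(1 / 2 : ℝ))) * Real.log (2 * K * N) / t) ^ (1 / (2 - β)) +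
            2 * C₂ (t ^ (-(1 / 2 : ℝ))) * Real.log (2 * K * N) / t ≤
          C * Real.log (8 * K * Real.log t) / t ^ (1 / 2 : ℝ) := by
  obtain ⟨hβ0, hβ1⟩ := hβ
  have h2β : (0:ℝ) < 2 - β := by linarith
  refine ⟨3 * (128 * ν + 1) + 32 * b₂ / 3, by positivity, 2, le_refl _, ?_⟩
  intro t ht K hK N hN1 hN2
  have ht0 : (0:ℝ) < t := by linarith
  have ht1 : (1:ℝ) ≤ t := by linarith
  have hlog2 : (0.6931471803:ℝ) < Real.log 2 := Real.log_two_gt_d9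
  have hlogt : (0.6931471803:ℝ) < Real.log t := by
    have : Real.log 2 ≤ Real.log t := Real.log_le_log (by norm_num) ht
    linarith
  have hlogt0 : 0 < Real.log t := by linarith
  have hK1 : (1:ℝ) ≤ (K:ℝ) := by exact_mod_cast hK
  have hN2' : (2:ℝ) ≤ (N:ℝ) := by nlinarith
  set δ : ℝ := t ^ (-(1/2 : ℝ)) with hδ
  clear_value δ
  set L : ℝ := Real.log (2 * K * N) with hL
  set M : ℝ := Real.log (8 * K * Real.log t) with hM
  clear_value L M
  have hKN0 : (0:ℝ) < 2 * K * N := by nlinarith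
  have hL0 : 0 < L := by rw [hL]; exact Real.log_pos (by nlinarith)
  have hLM : L ≤ M := by
    rw [hL, hM]
    apply Real.log_le_log hKN0
    nlinarith
  have hM1 : (1:ℝ) ≤ M := by
    rw [hM, Real.le_log_iff_exp_le (by nlinarith)]
    have := Real.exp_one_lt_d9
    nlinarith
  have hδ0 : 0 < δ := by rw [hδ]; exact Real.rpow_pos_of_pos ht0 _
  have hδ1 : δ ≤ 1 := by
    rw [hδ]; exact Real.rpow_le_one_of_one_le_of_nonpos ht1 (by norm_num)
  have hp0 : (0:ℝ) ≤ 1/(2-β) := by positivity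
  have hp1 : 1/(2-β) ≤ 1 := by rw [div_le_one h2β]; linarith
  have hδβ : δ ^ β = t ^ (-(β/2)) := by
    rw [hδ, ← Real.rpow_mul ht0.le]
    congr 1; ring
  have h25 : (2:ℝ) ^ ((5:ℝ) - β) ≤ 32 := by
    have h32 : (2:ℝ) ^ ((5:ℝ)) = 32 := by
      rw [show (5:ℝ) = ((5:ℕ):ℝ) by norm_num, Real.rpow_natCast]; norm_num
    calc (2:ℝ) ^ ((5:ℝ) - β) ≤ (2:ℝ) ^ ((5:ℝ)) :=
          Real.rpow_le_rpow_of_exponent_le (by norm_num) (by linarith)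
      _ = 32 := h32
  have h25' : (0:ℝ) < (2:ℝ) ^ ((5:ℝ) - β) := Real.rpow_pos_of_pos (by norm_num) _
  have hC1b : C₁ δ ≤ 128 * ν * t ^ (β/2) := by
    rw [hC₁, hδβ, Real.rpow_neg ht0.le, div_eq_mul_inv, inv_inv]
    have htβ : (0:ℝ) < t ^ (β/2) := Real.rpow_pos_of_pos ht0 _
    have hd2 : (1 + δ) ^ 2 ≤ 4 := by nlinarith
    have h128 : (2:ℝ) ^ ((5:ℝ) - β) * (1 + δ) ^ 2 ≤ 128 := by
      have := mul_le_mul h25 hd2 (by positivity) (by norm_num : (0:ℝ) ≤ 32)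
      linarith
    have h1 := mul_le_mul_of_nonneg_right (mul_le_mul_of_nonneg_right h128 hν.le) htβ.le
    exact h1
  have key1 : C₁ δ * L / t ≤ (128 * ν * L) * t ^ (-((2-β)/2)) := by
    have h1 : t ^ (-((2-β)/2)) = t ^ (β/2) / t := by
      rw [show -((2-β)/2) = β/2 - 1 by ring, Real.rpow_sub ht0, Real.rpow_one]
    rw [h1]
    calc C₁ δ * L / t ≤ (128 * ν * t ^ (β/2)) * L / t := by
          gcongr
      _ = 128 * ν * L * (t ^ (β/2) / t) := by ring
  have hC1δ0 : 0 ≤ C₁ δ := by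
    rw [hC₁]; positivity
  have hX0 : 0 ≤ C₁ δ * L / t := by positivity
  have key2 : (C₁ δ * L / t) ^ (1/(2-β)) ≤ (128*ν*L + 1) * δ := by
    have powle : ∀ x : ℝ, 0 ≤ x → x ^ (1/(2-β)) ≤ x + 1 := by
      intro x hx
      rcases le_total x 1 with h | h
      · have := Real.rpow_le_one hx h hp0; linarith
      · calc x ^ (1/(2-β)) ≤ x ^ (1:ℝ) := Real.rpow_le_rpow_of_exponent_le h hp1
          _ = x := Real.rpow_one x
          _ ≤ x + 1 := by linarith
    calc (C₁ δ * L / t) ^ (1/(2-β))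
        ≤ ((128*ν*L) * t ^ (-((2-β)/2))) ^ (1/(2-β)) :=
          Real.rpow_le_rpow hX0 key1 hp0
      _ = (128*ν*L) ^ (1/(2-β)) * (t ^ (-((2-β)/2))) ^ (1/(2-β)) :=
          Real.mul_rpow (by positivity) (by positivity)
      _ = (128*ν*L) ^ (1/(2-β)) * δ := by
          rw [hδ]
          congr 1
          rw [← Real.rpow_mul ht0.le]
          congr 1
          field_simp
      _ ≤ (128*ν*L + 1) * δ := by
          apply mul_le_mul_of_nonneg_right (powle _ (by positivity)) hδ0.le
  have hterm1 : 3 * (C₁ δ * L / t) ^ (1/(2-β)) ≤ 3 * (128*ν + 1) * M * δ := by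
    have h2 : (128*ν*L + 1) ≤ (128*ν + 1) * M := by
      have := mul_le_mul_of_nonneg_left hLM (by positivity : (0:ℝ) ≤ 128*ν)
      nlinarith
    have h3 : (128*ν*L + 1) * δ ≤ ((128*ν+1)*M) * δ := mul_le_mul_of_nonneg_right h2 hδ0.le
    have h4 := key2.trans h3
    nlinarith
  have hC2b : C₂ δ ≤ 16 * b₂ / 3 := by rw [hC₂]; nlinarith
  have hC2δ0 : 0 ≤ C₂ δ := by rw [hC₂]; positivity
  have htinv : t⁻¹ ≤ δ := by
    rw [hδ, ← Real.rpow_neg_one t]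
    exact Real.rpow_le_rpow_of_exponent_le ht1 (by norm_num)
  have hterm2 : 2 * C₂ δ * L / t ≤ (32 * b₂ / 3) * M * δ := by
    calc 2 * C₂ δ * L / t ≤ (32 * b₂ / 3) * M / t := by
          have h5 : 2 * C₂ δ * L ≤ (32 * b₂ / 3) * M := by
            have := mul_le_mul hC2b hLM hL0.le (by positivity : (0:ℝ) ≤ 16*b₂/3)
            nlinarith
          exact div_le_div_of_nonneg_right h5 ht0.le
      _ = (32 * b₂ / 3) * M * t⁻¹ := by ring
      _ ≤ (32 * b₂ / 3) * M * δ := by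
          apply mul_le_mul_of_nonneg_left htinv (by positivity)
  have hrhs : (3 * (128 * ν + 1) + 32 * b₂ / 3) * M / t ^ ((1:ℝ)/2) =
      (3 * (128 * ν + 1) + 32 * b₂ / 3) * M * δ := by
    rw [hδ, show -(1/2 : ℝ) = -(1/2 : ℝ) from rfl, Real.rpow_neg ht0.le]
    ring
  rw [hrhs]
  linarith
end
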